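/- If φ(z, z̄) is a smooth real function satisfying the Liouville equation 4 ∂∂̄φ = −e^{−2φ}, then T = ∂²φ + (∂φ)² is holomorphic, i.e. ∂̄(∂²φ + (∂φ)²) = 0. -/

import Mathlib

open Complex

/-- The Wirtinger derivative `∂ = ½(∂_x − i ∂_y)`. -/
noncomputable def wdz (f : ℂ → ℂ) (z : ℂ) : ℂ :=
  (fderiv ℝ f z 1 - Complex.I * fderiv ℝ f z Complex.I) / 2

/-- The Wirtinger derivative `∂̄ = ½(∂_x + i ∂_y)`. -/
noncomputable def wdzbar (f : ℂ → ℂ) (z : ℂ) : ℂ :=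
  (fderiv ℝ f z 1 + Complex.I * fderiv ℝ f z Complex.I) / 2

namespace LiouvilleAux

lemma contDiff_fderiv_apply {f : ℂ → ℂ} (hf : ContDiff ℝ (⊤ : ℕ∞) f) (v : ℂ) :
    ContDiff ℝ (⊤ : ℕ∞) (fun z => fderiv ℝ f z v) :=
  (hf.fderiv_right (by simp)).clm_apply contDiff_const

lemma contDiff_wdz {f : ℂ → ℂ} (hf : ContDiff ℝ (⊤ : ℕ∞) f) : ContDiff ℝ (⊤ : ℕ∞) (wdz f) := by
  unfold wdz
  exact ((contDiff_fderiv_apply hf 1).sub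
    (contDiff_const.mul (contDiff_fderiv_apply hf Complex.I))).div_const 2

lemma contDiff_wdzbar {f : ℂ → ℂ} (hf : ContDiff ℝ (⊤ : ℕ∞) f) : ContDiff ℝ (⊤ : ℕ∞) (wdzbar f) := by
  unfold wdzbar
  exact ((contDiff_fderiv_apply hf 1).add
    (contDiff_const.mul (contDiff_fderiv_apply hf Complex.I))).div_const 2

lemma fderiv_div_c {f : ℂ → ℂ} {z : ℂ} (hf : DifferentiableAt ℝ f z) (c v : ℂ) :
    fderiv ℝ (fun x => f x / c) z v = fderiv ℝ f z v / c := by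
  simp only [div_eq_mul_inv]
  rw [fderiv_mul_const hf c⁻¹]
  simp [smul_eq_mul, mul_comm]

lemma fderiv_fderiv_apply {f : ℂ → ℂ} (hf : ContDiff ℝ (⊤ : ℕ∞) f) (z u v : ℂ) :
    fderiv ℝ (fun w => fderiv ℝ f w v) z u = fderiv ℝ (fderiv ℝ f) z u v := by
  have hd : DifferentiableAt ℝ (fderiv ℝ f) z :=
    ((hf.fderiv_right (m := (⊤ : ℕ∞)) (by simp)).differentiable (by simp)) z
  rw [fderiv_clm_apply hd (differentiableAt_const v)]
  simp

lemma second_symm {f : ℂ → ℂ} (hf : ContDiff ℝ (⊤ : ℕ∞) f) (z u v : ℂ) :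
    fderiv ℝ (fderiv ℝ f) z u v = fderiv ℝ (fderiv ℝ f) z v u :=
  second_derivative_symmetric (fun y => ((hf.differentiable (by simp)) y).hasFDerivAt)
    (((hf.fderiv_right (m := (⊤ : ℕ∞)) (by simp)).differentiable (by simp) z).hasFDerivAt) u v

lemma wdz_wdzbar_comm {f : ℂ → ℂ} (hf : ContDiff ℝ (⊤ : ℕ∞) f) (z : ℂ) :
    wdzbar (wdz f) z = wdz (wdzbar f) z := by
  have d1 : DifferentiableAt ℝ (fun w => fderiv ℝ f w 1) z :=
    (contDiff_fderiv_apply hf 1).differentiable (by simp) z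
  have dI : DifferentiableAt ℝ (fun w => fderiv ℝ f w Complex.I) z :=
    (contDiff_fderiv_apply hf Complex.I).differentiable (by simp) z
  have key : ∀ u : ℂ,
      fderiv ℝ (wdz f) z u =
        (fderiv ℝ (fderiv ℝ f) z u 1 - Complex.I * fderiv ℝ (fderiv ℝ f) z u Complex.I) / 2 ∧
      fderiv ℝ (wdzbar f) z u =
        (fderiv ℝ (fderiv ℝ f) z u 1 + Complex.I * fderiv ℝ (fderiv ℝ f) z u Complex.I) / 2 := by
    intro u
    constructor
    · have h1 : wdz f = fun w =>
          (fderiv ℝ f w 1 - Complex.I * fderiv ℝ f w Complex.I) / 2 := rfl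
      rw [h1, fderiv_div_c ((d1.fun_sub (dI.const_mul Complex.I))) 2 u,
        fderiv_fun_sub d1 (dI.const_mul Complex.I), fderiv_const_mul dI Complex.I]
      simp [fderiv_fderiv_apply hf, smul_eq_mul]
    · have h1 : wdzbar f = fun w =>
          (fderiv ℝ f w 1 + Complex.I * fderiv ℝ f w Complex.I) / 2 := rfl
      rw [h1, fderiv_div_c ((d1.fun_add (dI.const_mul Complex.I))) 2 u,
        fderiv_fun_add d1 (dI.const_mul Complex.I), fderiv_const_mul dI Complex.I]
      simp [fderiv_fderiv_apply hf, smul_eq_mul]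
  rw [show wdzbar (wdz f) z
      = (fderiv ℝ (wdz f) z 1 + Complex.I * fderiv ℝ (wdz f) z Complex.I) / 2 from rfl,
    show wdz (wdzbar f) z
      = (fderiv ℝ (wdzbar f) z 1 - Complex.I * fderiv ℝ (wdzbar f) z Complex.I) / 2 from rfl,
    (key 1).1, (key Complex.I).1, (key 1).2, (key Complex.I).2,
    second_symm hf z 1 Complex.I]
  ring

lemma wdzbar_add {f g : ℂ → ℂ} {z : ℂ} (hf : DifferentiableAt ℝ f z)
    (hg : DifferentiableAt ℝ g z) :
    wdzbar (fun w => f w + g w) z = wdzbar f z + wdzbar g z := by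
  unfold wdzbar
  rw [fderiv_fun_add hf hg]
  simp
  ring

lemma wdzbar_mul {f g : ℂ → ℂ} {z : ℂ} (hf : DifferentiableAt ℝ f z)
    (hg : DifferentiableAt ℝ g z) :
    wdzbar (fun w => f w * g w) z = f z * wdzbar g z + g z * wdzbar f z := by
  unfold wdzbar
  rw [fderiv_fun_mul hf hg]
  simp [smul_eq_mul]
  ring

lemma fderiv_exp_comp_apply {g : ℂ → ℂ} {z : ℂ} (hg : DifferentiableAt ℝ g z) (v : ℂ) :
    fderiv ℝ (fun w => Complex.exp (g w)) z v = Complex.exp (g z) * fderiv ℝ g z v := by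
  have h : HasFDerivAt (fun w => Complex.exp (g w))
      ((((1 : ℂ →L[ℂ] ℂ).smulRight (Complex.exp (g z))).restrictScalars ℝ).comp
        (fderiv ℝ g z)) z :=
    (((Complex.hasDerivAt_exp (g z)).hasFDerivAt).restrictScalars ℝ).comp z hg.hasFDerivAt
  rw [h.fderiv]
  simp [smul_eq_mul, mul_comm]

end LiouvilleAux

open LiouvilleAux in
/-- If `φ` is a smooth real-valued solution of the Liouville equation
`4 ∂∂̄φ = −e^{−2φ}`, then the stress–energy tensor `T = ∂²φ + (∂φ)²`
is holomorphic: `∂̄T = 0`. -/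
theorem liouville_stress_energy_holomorphic (φ : ℂ → ℂ)
    (hsm : ContDiff ℝ (⊤ : ℕ∞) φ) (hreal : ∀ z, (φ z).im = 0)
    (hLiouville : ∀ z, 4 * wdz (wdzbar φ) z = -Complex.exp (-(2 * φ z))) :
    ∀ z, wdzbar (fun w => wdz (wdz φ) w + (wdz φ w) ^ 2) z = 0 := by
  intro z
  have hψ : ContDiff ℝ (⊤ : ℕ∞) (wdz φ) := contDiff_wdz hsm
  have hψ2 : ContDiff ℝ (⊤ : ℕ∞) (wdz (wdz φ)) := contDiff_wdz hψ
  have hφd : DifferentiableAt ℝ φ z := hsm.differentiable (by simp) z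
  -- differentiability of square
  have hsq : DifferentiableAt ℝ (fun w => (wdz φ w) ^ 2) z := by
    have := (hψ.differentiable (by simp) z)
    exact this.pow 2
  rw [wdzbar_add (hψ2.differentiable (by simp) z) hsq]
  -- square term
  have hpow : (fun w => (wdz φ w) ^ 2) = fun w => wdz φ w * wdz φ w := by
    funext w; ring
  rw [hpow, wdzbar_mul (hψ.differentiable (by simp) z) (hψ.differentiable (by simp) z)]
  -- commutation for the first term
  rw [wdz_wdzbar_comm hψ z]
  -- pointwise formula for ∂̄∂φ
  have hpt : ∀ w, wdzbar (wdz φ) w = -Complex.exp (-(2 * φ w)) / 4 := by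
    intro w
    rw [wdz_wdzbar_comm hsm w]
    linear_combination (hLiouville w) / 4
  have hfun : wdzbar (wdz φ) = fun w => -Complex.exp (-(2 * φ w)) / 4 := funext hpt
  rw [hfun]
  -- derivative of the exponential side
  have hg : DifferentiableAt ℝ (fun w => -(2 * φ w)) z := (hφd.const_mul 2).neg
  have hgv : ∀ v, fderiv ℝ (fun w => -(2 * φ w)) z v = -(2 * fderiv ℝ φ z v) := by
    intro v
    rw [fderiv_fun_neg, fderiv_const_mul hφd 2]
    simp [smul_eq_mul]
  have hFv : ∀ v, fderiv ℝ (fun w => -Complex.exp (-(2 * φ w)) / 4) z v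
      = -(Complex.exp (-(2 * φ z)) * -(2 * fderiv ℝ φ z v)) / 4 := by
    intro v
    have hexp : DifferentiableAt ℝ (fun w => Complex.exp (-(2 * φ w))) z := by
      exact ((((Complex.hasDerivAt_exp _).hasFDerivAt).restrictScalars ℝ).comp z
        hg.hasFDerivAt).differentiableAt
    rw [fderiv_div_c hexp.fun_neg 4 v, fderiv_fun_neg]
    simp only [ContinuousLinearMap.neg_apply]
    rw [fderiv_exp_comp_apply hg v, hgv v]
  have hW : wdz (fun w => -Complex.exp (-(2 * φ w)) / 4) z
      = Complex.exp (-(2 * φ z)) * wdz φ z / 2 := by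
    unfold wdz
    rw [hFv 1, hFv Complex.I]
    ring
  rw [hW]
  show Complex.exp (-(2 * φ z)) * wdz φ z / 2 +
    (wdz φ z * (-Complex.exp (-(2 * φ z)) / 4) + wdz φ z * (-Complex.exp (-(2 * φ z)) / 4)) = 0
  ring
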